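/- For any finite simple undirected graph with at least one edge in which every vertex has degree at least 1, the local and global means satisfy μ_L = μ_G + μ_D · C, where C = (1/(2|E|)) · Σ_{(i,j)∈Ê} (D_i − μ_G)·(1/D_j − 1/μ_D) is the covariance between the origin degree distribution and the inverse destination degree distribution over directed edges. -/
import Mathlib


open Finset

variable {V : Type*}

/-- Set of neighbors of `v` as a `Finset` (classical). -/
noncomputable def nbr (G : SimpleGraph V) [Fintype V] (v : V) : Finset V :=
  haveI := Classical.decRel G.Adj
  G.neighborFinset v

/-- Degree of vertex `v`: number of its neighbors. -/
noncomputable def deg (G : SimpleGraph V) [Fintype V] (v : V) : ℕ :=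
  (nbr G v).card

/-- Average degree of the friends of `v`. -/
noncomputable def friendAvg (G : SimpleGraph V) [Fintype V] (v : V) : ℝ :=
  (∑ j ∈ nbr G v, (deg G j : ℝ)) / (deg G v : ℝ)

/-- Mean degree of the network. -/
noncomputable def meanDeg (G : SimpleGraph V) [Fintype V] : ℝ :=
  (∑ i : V, (deg G i : ℝ)) / (Fintype.card V : ℝ)

/-- Local mean: average over vertices of the average friend degree. -/
noncomputable def localMean (G : SimpleGraph V) [Fintype V] : ℝ :=
  (∑ i : V, friendAvg G i) / (Fintype.card V : ℝ)

/-- Global mean: total number of friends of friends over total number of friends. -/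
noncomputable def globalMean (G : SimpleGraph V) [Fintype V] : ℝ :=
  (∑ i : V, ∑ j ∈ nbr G i, (deg G j : ℝ)) / (∑ i : V, (deg G i : ℝ))

/-- Number of (undirected) edges. -/
noncomputable def edgeCount (G : SimpleGraph V) [Fintype V] : ℕ :=
  Nat.card G.edgeSet

/-- m-th moment of the degree distribution. -/
noncomputable def kappa (G : SimpleGraph V) [Fintype V] (m : ℤ) : ℝ :=
  (∑ i : V, (deg G i : ℝ) ^ m) / (Fintype.card V : ℝ)

lemma mem_nbr (G : SimpleGraph V) [Fintype V] {v w : V} : w ∈ nbr G v ↔ G.Adj v w := by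
  classical
  unfold nbr
  exact SimpleGraph.mem_neighborFinset G v w

lemma swap_sum (G : SimpleGraph V) [Fintype V] (f : V → V → ℝ) :
    ∑ i : V, ∑ j ∈ nbr G i, f i j = ∑ i : V, ∑ j ∈ nbr G i, f j i := by
  refine Finset.sum_comm' ?_
  intro x y
  simp [mem_nbr, G.adj_comm x y]

lemma sum_deg_eq (G : SimpleGraph V) [Fintype V] :
    ∑ i : V, (deg G i : ℝ) = 2 * (edgeCount G : ℝ) := by
  classical
  have h1 : ∀ v, deg G v = G.degree v := by
    intro v
    unfold deg nbr SimpleGraph.degree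
    congr 1
  have h2 : edgeCount G = G.edgeFinset.card := by
    simp [edgeCount, Nat.card_eq_fintype_card, SimpleGraph.edgeFinset]
  have := G.sum_degrees_eq_twice_card_edges
  push_cast [h1, h2]
  exact_mod_cast this

/-- `μ_L = μ_G + μ_D · C`, where `C` is the covariance between the origin degree and
the inverse destination degree over the directed edge set `Ê` (each undirected edge
contributing both orientations, `|Ê| = 2|E|`). -/
theorem stmt6 {V : Type*} [Fintype V] (G : SimpleGraph V) (hE : G.edgeSet.Nonempty)
    (hdeg : ∀ v : V, 1 ≤ deg G v) :
    localMean G = globalMean G + meanDeg G *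
      ((∑ i : V, ∑ j ∈ nbr G i,
          ((deg G i : ℝ) - globalMean G) * (1 / (deg G j : ℝ) - 1 / meanDeg G)) /
        (2 * (edgeCount G : ℝ))) := by
  classical
  obtain ⟨e, he⟩ := hE
  have hV : Nonempty V := ⟨e.out.1⟩
  have hN : (0:ℝ) < (Fintype.card V : ℝ) := by exact_mod_cast Fintype.card_pos
  have hd : ∀ v : V, (deg G v : ℝ) ≠ 0 := fun v => by
    have := hdeg v
    positivity
  have hS : (0:ℝ) < ∑ i : V, (deg G i : ℝ) := by
    apply Finset.sum_pos
    · intro i _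
      have := hdeg i
      positivity
    · exact univ_nonempty
  set N : ℝ := (Fintype.card V : ℝ) with hNdef
  set S : ℝ := ∑ i : V, (deg G i : ℝ) with hSdef
  -- B : sum of neighbor degrees = sum of squares
  have hB : ∑ i : V, ∑ j ∈ nbr G i, (deg G j : ℝ)
      = ∑ i : V, (deg G i : ℝ) * (deg G i : ℝ) := by
    rw [swap_sum]
    refine Finset.sum_congr rfl fun i _ => ?_
    rw [Finset.sum_const, nsmul_eq_mul]
    rfl
  set Q : ℝ := ∑ i : V, (deg G i : ℝ) * (deg G i : ℝ) with hQdef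
  -- A : local sum
  set A : ℝ := ∑ i : V, ∑ j ∈ nbr G i, (deg G i : ℝ) / (deg G j : ℝ) with hAdef
  have hA : ∑ i : V, friendAvg G i = A := by
    rw [hAdef, swap_sum]
    refine Finset.sum_congr rfl fun i _ => ?_
    rw [friendAvg, Finset.sum_div]
  -- C : sum of inverse neighbor degrees = N
  have hC : ∑ i : V, ∑ j ∈ nbr G i, 1 / (deg G j : ℝ) = N := by
    rw [swap_sum]
    have : ∀ i : V, ∑ _j ∈ nbr G i, 1 / (deg G i : ℝ) = 1 := by
      intro i
      rw [Finset.sum_const, nsmul_eq_mul]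
      show (deg G i : ℝ) * (1 / (deg G i : ℝ)) = 1
      exact mul_one_div_cancel (hd i)
    rw [Finset.sum_congr rfl fun i _ => this i]
    simp [hNdef]
  -- sum of ones
  have hOne : ∑ i : V, ∑ _j ∈ nbr G i, (1:ℝ) = S := by
    simp only [Finset.sum_const, nsmul_eq_mul, mul_one, hSdef]
    rfl
  have hμG : globalMean G = Q / S := by rw [globalMean, hB]
  have hμD : meanDeg G = S / N := rfl
  have hμD0 : meanDeg G ≠ 0 := by rw [hμD]; positivity
  have hμGdef : globalMean G ≠ 0 ∨ True := Or.inr trivial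
  -- expand the covariance sum
  have hExp : (∑ i : V, ∑ j ∈ nbr G i,
      ((deg G i : ℝ) - globalMean G) * (1 / (deg G j : ℝ) - 1 / meanDeg G))
      = A - (1 / meanDeg G) * Q - globalMean G * N + globalMean G * (1 / meanDeg G) * S := by
    have key : ∀ i j : V, ((deg G i : ℝ) - globalMean G) * (1 / (deg G j : ℝ) - 1 / meanDeg G)
        = (deg G i : ℝ) / (deg G j : ℝ) - (1 / meanDeg G) * (deg G i : ℝ)
          - globalMean G * (1 / (deg G j : ℝ)) + globalMean G * (1 / meanDeg G) * 1 := by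
      intro i j
      ring
    have hQ' : ∑ i : V, ∑ _j ∈ nbr G i, (deg G i : ℝ) = Q := by
      refine Finset.sum_congr rfl fun i _ => ?_
      rw [Finset.sum_const, nsmul_eq_mul]
      rfl
    simp only [key, Finset.sum_add_distrib, Finset.sum_sub_distrib, ← Finset.mul_sum]
    rw [hC, hOne, ← hAdef, hQ']
  rw [localMean, hA, hExp, hμG, hμD, ← sum_deg_eq, ← hSdef]
  field_simp
  ring
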